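/- Suppose X has E[X] = 0, E[X^2] = 1, and E[X(X - s)1{X ≤ s}] = P(X ≤ s) for all s ∈ ℝ. Then X has the standard normal distribution. -/

import Mathlib

/-!
Write `g t = -∫_{x < t} x dν` for the law `ν` of `X`. Fubini turns the hypothesis into
`F s = ∫_{t < s} g t dt`, so `ν` has the density `g`, which is nonnegative because `X` is centred.
Rewriting `g` through its own density gives `g t = -∫_{x < t} x g x dx`: hence `g` is continuous,
then differentiable with `g' t = -t g t`, so `g t = g 0 e^{-t²/2}`, and total mass one fixes `g 0`.
-/

open MeasureTheory ProbabilityTheory Real Set Filter Topology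
open scoped ENNReal

/-- For centred `ν` this is `∫_{x ≥ t} x dν`, the density of the zero-bias transform of `ν`. -/
noncomputable def zeroBiasDensity (ν : Measure ℝ) (t : ℝ) : ℝ := -∫ x in Iio t, x ∂ν

lemma measurable_zeroBiasDensity (ν : Measure ℝ) [SFinite ν] : Measurable (zeroBiasDensity ν) := by
  have h : StronglyMeasurable ({p : ℝ × ℝ | p.2 < p.1}.indicator Prod.snd) :=
    (measurable_snd.indicator (measurableSet_lt measurable_snd measurable_fst)).stronglyMeasurable
  have hrepr : zeroBiasDensity ν =
      -fun t => ∫ x, {p : ℝ × ℝ | p.2 < p.1}.indicator Prod.snd (t, x) ∂ν := by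
    ext t
    rw [zeroBiasDensity, ← integral_indicator measurableSet_Iio]
    rfl
  rw [hrepr]
  exact (h.integral_prod_right' (ν := ν)).measurable.neg

lemma zeroBiasDensity_nonneg {ν : Measure ℝ} (hint : Integrable (fun x => x) ν)
    (hmean : ∫ x, x ∂ν = 0) (t : ℝ) : 0 ≤ zeroBiasDensity ν t := by
  rw [zeroBiasDensity, neg_nonneg]
  rcases le_or_gt t 0 with ht | ht
  · exact setIntegral_nonpos measurableSet_Iio fun x hx => (mem_Iio.1 hx).le.trans ht
  · have hsplit := integral_add_compl (measurableSet_Iio (a := t)) hint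
    have hupper : 0 ≤ ∫ x in (Iio t)ᶜ, x ∂ν := by
      rw [compl_Iio]
      exact setIntegral_nonneg measurableSet_Ici fun x hx => ht.le.trans hx
    linarith

section Fubini

variable {ν : Measure ℝ} (s : ℝ)

noncomputable def zeroBiasKernel (s : ℝ) : ℝ × ℝ → ℝ :=
  {p : ℝ × ℝ | p.1 < p.2 ∧ p.2 < s}.indicator fun p => -p.1

lemma zeroBiasKernel_apply (x t : ℝ) :
    zeroBiasKernel s (x, t) = (Ioo x s).indicator (fun _ => -x) t := by
  simp [zeroBiasKernel, indicator_apply, mem_Ioo]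

lemma integral_zeroBiasKernel_left (x : ℝ) :
    ∫ t, zeroBiasKernel s (x, t) = if x ≤ s then x * (x - s) else 0 := by
  simp_rw [zeroBiasKernel_apply]
  rw [integral_indicator_const _ measurableSet_Ioo, smul_eq_mul,
    measureReal_def, Real.volume_Ioo, ENNReal.toReal_ofReal']
  split_ifs with h
  · rw [max_eq_left (by linarith)]; ring
  · rw [max_eq_right (by linarith)]; ring

lemma integral_zeroBiasKernel_right (t : ℝ) :
    ∫ x, zeroBiasKernel s (x, t) ∂ν = (Iio s).indicator (zeroBiasDensity ν) t := by
  by_cases ht : t < s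
  · have hslice : (fun x => zeroBiasKernel s (x, t)) = (Iio t).indicator fun x => -x := by
      ext x; simp [zeroBiasKernel, indicator_apply, ht]
    rw [indicator_of_mem (show t ∈ Iio s from ht), hslice, integral_indicator measurableSet_Iio,
      integral_neg, zeroBiasDensity]
  · have hslice : (fun x => zeroBiasKernel s (x, t)) = 0 := by
      ext x; simp [zeroBiasKernel, ht]
    rw [indicator_of_notMem (show t ∉ Iio s from ht), hslice, Pi.zero_def, integral_zero]

lemma integrable_zeroBiasKernel [SFinite ν] (h1 : Integrable (fun x => x) ν)
    (h2 : Integrable (fun x => x ^ 2) ν) : Integrable (zeroBiasKernel s) (ν.prod volume) := by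
  have hmeas : Measurable (zeroBiasKernel s) :=
    measurable_fst.neg.indicator ((measurableSet_lt measurable_fst measurable_snd).inter
      (measurable_snd measurableSet_Iio))
  have hnorm : ∀ x, ∫ t, ‖zeroBiasKernel s (x, t)‖ = max (s - x) 0 * |x| := fun x => by
    simp_rw [zeroBiasKernel_apply, norm_indicator_eq_indicator_norm, norm_neg, Real.norm_eq_abs]
    rw [integral_indicator_const _ measurableSet_Ioo, smul_eq_mul, measureReal_def,
      Real.volume_Ioo, ENNReal.toReal_ofReal']
  rw [integrable_prod_iff hmeas.aestronglyMeasurable]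
  refine ⟨Eventually.of_forall fun x => ?_, ?_⟩
  · simp_rw [zeroBiasKernel_apply]
    rw [integrable_indicator_iff measurableSet_Ioo]
    exact integrableOn_const measure_Ioo_lt_top.ne
  · simp only [hnorm]
    refine ((h1.norm.mul_const |s|).add h2).mono (by fun_prop) (Eventually.of_forall fun x => ?_)
    have hmax : max (s - x) 0 ≤ |s| + |x| :=
      max_le ((le_abs_self _).trans (abs_sub _ _)) (by positivity)
    simp only [Pi.add_apply, Real.norm_eq_abs]
    rw [abs_of_nonneg (mul_nonneg (le_max_right _ _) (abs_nonneg x)),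
      abs_of_nonneg (by positivity : (0 : ℝ) ≤ |x| * |s| + x ^ 2)]
    nlinarith [abs_nonneg x, sq_abs x]

lemma integrableOn_zeroBiasDensity_Iio [SFinite ν] (h1 : Integrable (fun x => x) ν)
    (h2 : Integrable (fun x => x ^ 2) ν) : IntegrableOn (zeroBiasDensity ν) (Iio s) := by
  have hint := (integrable_zeroBiasKernel s h1 h2).integral_prod_right
  simp only [integral_zeroBiasKernel_right] at hint
  exact (integrable_indicator_iff measurableSet_Iio).1 hint

lemma setIntegral_zeroBiasDensity_Iio [SFinite ν] (h1 : Integrable (fun x => x) ν)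
    (h2 : Integrable (fun x => x ^ 2) ν) :
    ∫ t in Iio s, zeroBiasDensity ν t = ∫ x, (if x ≤ s then x * (x - s) else 0) ∂ν := by
  have hswap := integral_integral_swap (f := fun x t => zeroBiasKernel s (x, t))
    (integrable_zeroBiasKernel s h1 h2)
  simp only [integral_zeroBiasKernel_left, integral_zeroBiasKernel_right,
    integral_indicator measurableSet_Iio] at hswap
  exact hswap.symm

end Fubini

lemma eq_withDensity_of_toReal_measure_Iic {ν : Measure ℝ} [IsFiniteMeasure ν] {g : ℝ → ℝ}
    (hg : 0 ≤ g) (hint : ∀ s, IntegrableOn g (Iio s))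
    (hcdf : ∀ s, (ν (Iic s)).toReal = ∫ t in Iio s, g t) :
    ν = volume.withDensity fun t => ENNReal.ofReal (g t) := by
  refine Measure.ext_of_Iic _ _ fun s => ?_
  rw [withDensity_apply _ measurableSet_Iic, ← setLIntegral_congr Iio_ae_eq_Iic,
    ← ofReal_integral_eq_lintegral_ofReal (hint s) (ae_of_all _ hg), ← hcdf s,
    ENNReal.ofReal_toReal (measure_ne_top ν _)]

section WithDensityOfReal

variable {α : Type*} [MeasurableSpace α] {μ : Measure α} {g : α → ℝ}

lemma integrable_withDensity_ofReal_iff (hg : Measurable g) (hg0 : 0 ≤ g) {f : α → ℝ} :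
    Integrable f (μ.withDensity fun x => ENNReal.ofReal (g x)) ↔
      Integrable (fun x => f x * g x) μ := by
  simp only [integrable_withDensity_iff hg.ennreal_ofReal
    (ae_of_all _ fun _ => ENNReal.ofReal_lt_top), ENNReal.toReal_ofReal (hg0 _)]

lemma setIntegral_withDensity_ofReal (hg : Measurable g) (hg0 : 0 ≤ g) (f : α → ℝ) {s : Set α}
    (hs : MeasurableSet s) :
    ∫ x in s, f x ∂μ.withDensity (fun x => ENNReal.ofReal (g x)) = ∫ x in s, f x * g x ∂μ := by
  rw [setIntegral_withDensity_eq_setIntegral_toReal_smul hg.ennreal_ofReal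
    (ae_of_all _ fun _ => ENNReal.ofReal_lt_top) f hs]
  simp only [ENNReal.toReal_ofReal (hg0 _), smul_eq_mul, mul_comm]

end WithDensityOfReal

section Primitive

variable {f : ℝ → ℝ}

lemma setIntegral_Iio_eq_add_intervalIntegral (hf : Integrable f) (t : ℝ) :
    ∫ x in Iio t, f x = (∫ x in Iic 0, f x) + ∫ x in (0)..t, f x := by
  rw [setIntegral_congr_set Iio_ae_eq_Iic, ← intervalIntegral.integral_Iic_sub_Iic
    hf.integrableOn hf.integrableOn]
  exact (add_sub_cancel _ _).symm

lemma continuous_setIntegral_Iio (hf : Integrable f) : Continuous fun t => ∫ x in Iio t, f x := by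
  simp_rw [setIntegral_Iio_eq_add_intervalIntegral hf]
  exact continuous_const.add
    (intervalIntegral.continuous_primitive (fun _ _ => hf.intervalIntegrable) 0)

lemma hasDerivAt_setIntegral_Iio (hf : Integrable f) {t : ℝ} (hcont : ContinuousAt f t) :
    HasDerivAt (fun t => ∫ x in Iio t, f x) (f t) t := by
  simp_rw [setIntegral_Iio_eq_add_intervalIntegral hf]
  exact (intervalIntegral.integral_hasDerivAt_right (a := 0) hf.intervalIntegrable
    hf.aestronglyMeasurable.stronglyMeasurableAtFilter hcont).const_add _

end Primitive

lemma eq_mul_exp_of_hasDerivAt {g : ℝ → ℝ} (hg : ∀ t, HasDerivAt g (-(t * g t)) t) (t : ℝ) :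
    g t = g 0 * exp (-t ^ 2 / 2) := by
  have hderiv : ∀ t, HasDerivAt (fun t => g t * exp (t ^ 2 / 2)) 0 t := fun t => by
    have hexp : HasDerivAt (fun t => exp (t ^ 2 / 2)) (exp (t ^ 2 / 2) * t) t := by
      simpa using ((hasDerivAt_pow 2 t).div_const 2).exp
    have h := (hg t).mul hexp
    rwa [show -(t * g t) * exp (t ^ 2 / 2) + g t * (exp (t ^ 2 / 2) * t) = 0 by ring] at h
  have hconst : g t * exp (t ^ 2 / 2) = g 0 := by
    simpa using is_const_of_deriv_eq_zero (fun t => (hderiv t).differentiableAt)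
      (fun t => (hderiv t).deriv) t 0
  rw [← hconst, mul_assoc, ← exp_add, show t ^ 2 / 2 + -t ^ 2 / 2 = 0 by ring, exp_zero, mul_one]

lemma eq_mul_exp_of_eq_neg_setIntegral_Iio {g : ℝ → ℝ} (hint : Integrable fun x => x * g x)
    (hg : ∀ t, g t = -∫ x in Iio t, x * g x) (t : ℝ) : g t = g 0 * exp (-t ^ 2 / 2) := by
  have hcont : Continuous g := by
    rw [funext hg]
    exact (continuous_setIntegral_Iio hint).neg
  refine eq_mul_exp_of_hasDerivAt (fun t => ?_) t
  exact (hasDerivAt_setIntegral_Iio hint (continuous_id.mul hcont).continuousAt).neg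
    |>.congr_of_eventuallyEq (Eventually.of_forall hg)

lemma eq_gaussianReal_of_eq_withDensity_mul_exp {ν : Measure ℝ} [IsProbabilityMeasure ν] {c : ℝ}
    (h : ν = volume.withDensity fun t => ENNReal.ofReal (c * exp (-t ^ 2 / 2))) :
    ν = gaussianReal 0 1 := by
  have hpdf : (fun t => ENNReal.ofReal (c * exp (-t ^ 2 / 2)))
      = ENNReal.ofReal (c * √(2 * π)) • gaussianPDF 0 1 := by
    ext t
    rw [Pi.smul_apply, smul_eq_mul, gaussianPDF, ← ENNReal.ofReal_mul'
      (gaussianPDFReal_nonneg 0 1 t)]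
    congr 1
    simp only [gaussianPDFReal, NNReal.coe_one, mul_one, sub_zero]
    field_simp
  have hν : ν = ENNReal.ofReal (c * √(2 * π)) • gaussianReal 0 1 := by
    rw [h, hpdf, withDensity_smul _ (measurable_gaussianPDF 0 1),
      gaussianReal_of_var_ne_zero 0 one_ne_zero]
  have hmass : ENNReal.ofReal (c * √(2 * π)) = 1 := by
    simpa using (congrArg (· univ) hν).symm
  rw [hν, hmass, one_smul]

theorem eq_gaussianReal_of_zeroBias_fixed (ν : Measure ℝ) [IsProbabilityMeasure ν]
    (h1 : Integrable (fun x => x) ν) (h2 : Integrable (fun x => x ^ 2) ν)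
    (hmean : ∫ x, x ∂ν = 0)
    (hfix : ∀ s, ∫ x, (if x ≤ s then x * (x - s) else 0) ∂ν = (ν (Iic s)).toReal) :
    ν = gaussianReal 0 1 := by
  set g := zeroBiasDensity ν
  have hg : Measurable g := measurable_zeroBiasDensity ν
  have hg0 : 0 ≤ g := zeroBiasDensity_nonneg h1 hmean
  have hdens : ν = volume.withDensity fun t => ENNReal.ofReal (g t) :=
    eq_withDensity_of_toReal_measure_Iic hg0 (integrableOn_zeroBiasDensity_Iio · h1 h2)
      fun s => by rw [← hfix s, setIntegral_zeroBiasDensity_Iio s h1 h2]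
  have hint : Integrable fun x => x * g x :=
    (integrable_withDensity_ofReal_iff hg hg0).1 (hdens ▸ h1)
  have hstein : ∀ t, g t = -∫ x in Iio t, x * g x := fun t => by
    change -∫ x in Iio t, x ∂ν = _
    rw [hdens, setIntegral_withDensity_ofReal hg hg0 _ measurableSet_Iio]
  have hgauss := eq_mul_exp_of_eq_neg_setIntegral_Iio hint hstein
  refine eq_gaussianReal_of_eq_withDensity_mul_exp (c := g 0) (hdens.trans ?_)
  simp_rw [← hgauss]

theorem stmt_9_general {Ω : Type*} [MeasurableSpace Ω] (μ : Measure Ω) [IsProbabilityMeasure μ]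
    (X : Ω → ℝ) (hXmeas : Measurable X)
    (hX1 : Integrable X μ) (hX2 : Integrable (fun ω => (X ω) ^ 2) μ)
    (hmean : ∫ ω, X ω ∂μ = 0)
    (hfix : ∀ s : ℝ, ∫ ω, (if X ω ≤ s then X ω * (X ω - s) else 0) ∂μ
      = (μ {ω | X ω ≤ s}).toReal) :
    Measure.map X μ = gaussianReal 0 1 := by
  have hX := hXmeas.aemeasurable (μ := μ)
  have := Measure.isProbabilityMeasure_map (μ := μ) hX
  refine eq_gaussianReal_of_zeroBias_fixed _ ?_ ?_ ?_ fun s => ?_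
  · exact (integrable_map_measure (by fun_prop) hX).2 hX1
  · exact (integrable_map_measure (by fun_prop) hX).2 hX2
  · rwa [integral_map hX (by fun_prop)]
  · have hm : Measurable fun x : ℝ => if x ≤ s then x * (x - s) else 0 :=
      Measurable.ite measurableSet_Iic (by fun_prop) measurable_const
    rw [integral_map hX hm.aestronglyMeasurable, Measure.map_apply hXmeas measurableSet_Iic]
    exact hfix s

theorem stmt_9 {Ω : Type*} [MeasurableSpace Ω] (μ : Measure Ω) [IsProbabilityMeasure μ]
    (X : Ω → ℝ) (hXmeas : Measurable X)
    (hX1 : Integrable X μ) (hX2 : Integrable (fun ω => (X ω) ^ 2) μ)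
    (hmean : ∫ ω, X ω ∂μ = 0) (hvar : ∫ ω, (X ω) ^ 2 ∂μ = 1)
    (hfix : ∀ s : ℝ, ∫ ω, (if X ω ≤ s then X ω * (X ω - s) else 0) ∂μ
      = (μ {ω | X ω ≤ s}).toReal) :
    Measure.map X μ = gaussianReal 0 1 :=
  stmt_9_general μ X hXmeas hX1 hX2 hmean hfix
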